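/- Let X be an additive category with weak kernels in which every epimorphism is a weak cokernel, and let φ : F₀ → F₁ be a morphism in mod X with Ker φ ∈ eff X and Coker φ ∈ eff X. Then for every X ∈ X, precomposition with φ gives an isomorphism Hom(F₁, X(-,X)) → Hom(F₀, X(-,X)). -/

import Mathlib

open CategoryTheory CategoryTheory.Limits

universe v u

variable {C : Type u} [Category.{v} C] [Preadditive C] [HasFiniteBiproducts C]

/-- `f : A ⟶ B` is a weak kernel of `g : B ⟶ X` -/
def IsWeakKernel {A B X : C} (f : A ⟶ B) (g : B ⟶ X) : Prop :=
  f ≫ g = 0 ∧ ∀ ⦃T : C⦄ (l : T ⟶ B), l ≫ g = 0 → ∃ k : T ⟶ A, k ≫ f = l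

/-- `h : B ⟶ X` is a weak cokernel of `f : A ⟶ B` -/
def IsWeakCokernel {A B X : C} (h : B ⟶ X) (f : A ⟶ B) : Prop :=
  f ≫ h = 0 ∧ ∀ ⦃T : C⦄ (l : B ⟶ T), f ≫ l = 0 → ∃ k : X ⟶ T, h ≫ k = l

/-- `C` has weak kernels. -/
def HasWeakKernels : Prop :=
  ∀ ⦃a b : C⦄ (f : a ⟶ b), ∃ (c : C) (k : c ⟶ a), IsWeakKernel k f

/-- Every epimorphism of `C` is a weak cokernel. -/
def EpiIsWeakCokernel : Prop :=
  ∀ ⦃a b : C⦄ (f : a ⟶ b), Epi f → ∃ (c : C) (g : c ⟶ a), IsWeakCokernel f g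

variable (C) in
/-- A functor `F : Cᵒᵖ ⥤ Ab` is finitely presented if it is the cokernel of a morphism
between representable functors. -/
def IsFP (F : Cᵒᵖ ⥤ AddCommGrpCat.{v}) : Prop :=
  ∃ (X₁ X₀ : C) (f : X₁ ⟶ X₀) (p : preadditiveYoneda.obj X₀ ⟶ F)
    (w : preadditiveYoneda.map f ≫ p = 0),
    Nonempty (IsColimit (CokernelCofork.ofπ p w))

variable (C) in
/-- A functor `F : Cᵒᵖ ⥤ Ab` is effaceable if it admits a presentation induced by an
epimorphism of `C`. -/
def IsEff (F : Cᵒᵖ ⥤ AddCommGrpCat.{v}) : Prop :=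
  ∃ (X₁ X₀ : C) (f : X₁ ⟶ X₀), Epi f ∧
    ∃ (p : preadditiveYoneda.obj X₀ ⟶ F) (w : preadditiveYoneda.map f ≫ p = 0),
      Nonempty (IsColimit (CokernelCofork.ofπ p w))

/-!
Injectivity: a map `F₁ ⟶ X(-,X)` killed by `φ` factors through `Coker φ`, and an effaceable
functor `G` has no nonzero map to a representable one, since for a presentation
`X(-,X₁) ⟶ X(-,X₀) ⟶ G` by an epimorphism `f : X₁ ⟶ X₀` such a map comes from some
`g : X₀ ⟶ X` with `f ≫ g = 0`.

Surjectivity: `α : F₀ ⟶ X(-,X)` kills `Ker φ`, so it descends to the coimage of `φ`, a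
subobject of `F₁` with cokernel `Coker φ`. Extending along it amounts to splitting the pushout
extension `0 ⟶ X(-,X) ⟶ E ⟶ Coker φ ⟶ 0`, i.e. to `Ext¹(G, X(-,X)) = 0` for effaceable `G`:
lifting `X(-,X₀) ⟶ G` to `e : X(-,X₀) ⟶ E`, the restriction of `e` along `f` lands in `X(-,X)`
and is killed by the weak kernel of `f`; as `f` is a weak cokernel it is `X(-, f ≫ v)`, and
`e - X(-,v)` descends to a section of `E ⟶ G`.
-/
section

omit [HasFiniteBiproducts C]

open Opposite

lemma IsEff.of_iso {F G : Cᵒᵖ ⥤ AddCommGrpCat.{v}} (α : F ≅ G) (h : IsEff C F) : IsEff C G := by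
  obtain ⟨X₁, X₀, f, hf, p, w, ⟨hc⟩⟩ := h
  exact ⟨X₁, X₀, f, hf, p ≫ α.hom, by rw [reassoc_of% w, zero_comp],
    ⟨IsColimit.ofIsoColimit hc (Cofork.ext α (by simp))⟩⟩

lemma IsEff.hom_eq_zero {G : Cᵒᵖ ⥤ AddCommGrpCat.{v}} (hG : IsEff C G) {X : C}
    (ψ : G ⟶ preadditiveYoneda.obj X) : ψ = 0 := by
  obtain ⟨X₁, X₀, f, hf, p, w, ⟨hc⟩⟩ := hG
  have : Epi p := epi_of_isColimit_cofork hc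
  obtain ⟨g, hg⟩ := preadditiveYoneda.map_surjective (p ≫ ψ)
  have hfg : f ≫ g = 0 := preadditiveYoneda.map_eq_zero_iff.1 <| by
    rw [Functor.map_comp, hg, reassoc_of% w, zero_comp]
  rw [← cancel_epi p, comp_zero, ← hg, zero_of_epi_comp f hfg, Functor.map_zero]

lemma CategoryTheory.Functor.additive_of_epi {D : Type*} [Category D] [Preadditive D]
    {G H : D ⥤ AddCommGrpCat.{v}} [G.Additive] (π : G ⟶ H) [Epi π] : H.Additive where
  map_add {A B f g} := by
    ext y
    obtain ⟨x, rfl⟩ := (AddCommGrpCat.epi_iff_surjective (π.app A)).1 inferInstance y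
    simp only [← NatTrans.naturality_apply, G.map_add, AddCommGrpCat.hom_add,
      AddMonoidHom.add_apply, _root_.map_add]

lemma IsFP.additive {F : Cᵒᵖ ⥤ AddCommGrpCat.{v}} (h : IsFP C F) : F.Additive := by
  obtain ⟨_, X₀, _, p, _, ⟨hc⟩⟩ := h
  have : Epi p := epi_of_isColimit_cofork hc
  exact Functor.additive_of_epi p

lemma preadditiveYoneda_obj_hom_ext {X : C} {G : Cᵒᵖ ⥤ AddCommGrpCat.{v}}
    {α β : preadditiveYoneda.obj X ⟶ G} (h : α.app (op X) (𝟙 X) = β.app (op X) (𝟙 X)) :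
    α = β := by
  have key (γ : preadditiveYoneda.obj X ⟶ G) {Y : Cᵒᵖ} (g : Y.unop ⟶ X) :
      γ.app Y g = G.map g.op (γ.app (op X) (𝟙 X)) := by
    rw [← NatTrans.naturality_apply γ g.op (𝟙 X)]
    exact congrArg (γ.app Y) (Category.comp_id g).symm
  ext Y g
  exact (key α g).trans ((congrArg _ h).trans (key β g).symm)

def preadditiveYonedaObjHomOfElement (G : Cᵒᵖ ⥤ AddCommGrpCat.{v}) [G.Additive] {X : C}
    (x : G.obj (op X)) : preadditiveYoneda.obj X ⟶ G where
  app Y := AddCommGrpCat.ofHom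
    { toFun := fun g : Y.unop ⟶ X => G.map g.op x
      map_zero' := by
        change G.map (0 : Y.unop ⟶ X).op x = 0
        rw [op_zero, G.map_zero]; rfl
      map_add' := by
        intro (g : Y.unop ⟶ X) (g' : Y.unop ⟶ X)
        change G.map (g + g').op x = G.map g.op x + G.map g'.op x
        rw [op_add, G.map_add]; rfl }
  naturality Y Y' h := by
    ext (g : Y.unop ⟶ X)
    change G.map (h.unop ≫ g).op x = G.map h (G.map g.op x)
    rw [op_comp, G.map_comp]; rfl

lemma preadditiveYoneda_obj_exists_lift_of_epi {G H : Cᵒᵖ ⥤ AddCommGrpCat.{v}} [G.Additive]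
    (π : G ⟶ H) [Epi π] {X : C} (p : preadditiveYoneda.obj X ⟶ H) :
    ∃ e : preadditiveYoneda.obj X ⟶ G, e ≫ π = p := by
  obtain ⟨x, hx⟩ :=
    (AddCommGrpCat.epi_iff_surjective (π.app (op X))).1 inferInstance (p.app (op X) (𝟙 X))
  refine ⟨preadditiveYonedaObjHomOfElement G x, preadditiveYoneda_obj_hom_ext ?_⟩
  change π.app (op X) (G.map (𝟙 X).op x) = _
  rw [op_id, G.map_id]
  exact hx

lemma exists_map_comp_eq_of_comp_cokernel_π_eq_zero (hewc : EpiIsWeakCokernel (C := C))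
    {X X₁ X₀ : C} {E : Cᵒᵖ ⥤ AddCommGrpCat.{v}} (m : preadditiveYoneda.obj X ⟶ E) [Mono m]
    (f : X₁ ⟶ X₀) [Epi f] (e : preadditiveYoneda.obj X₀ ⟶ E)
    (he : preadditiveYoneda.map f ≫ e ≫ cokernel.π m = 0) :
    ∃ v : X₀ ⟶ X, preadditiveYoneda.map f ≫ e = preadditiveYoneda.map (f ≫ v) ≫ m := by
  have : Mono (ShortComplex.cokernelSequence m).f := ‹Mono m›
  obtain ⟨t, ht⟩ : ∃ t, t ≫ m = preadditiveYoneda.map f ≫ e :=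
    ⟨_, (ShortComplex.cokernelSequence_exact m).lift_f _ ((Category.assoc _ _ _).trans he)⟩
  obtain ⟨u, rfl⟩ := preadditiveYoneda.map_surjective t
  obtain ⟨X₂, g, hgf, hf⟩ := hewc f inferInstance
  have hgu : g ≫ u = 0 := by
    rw [← preadditiveYoneda.map_eq_zero_iff, ← cancel_mono m, Functor.map_comp, Category.assoc,
      ht, ← Functor.map_comp_assoc, hgf, Functor.map_zero, zero_comp, zero_comp]
  obtain ⟨v, rfl⟩ := hf u hgu
  exact ⟨v, ht.symm⟩

lemma exists_retraction_of_isEff_cokernel (hewc : EpiIsWeakCokernel (C := C)) {X : C}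
    {E : Cᵒᵖ ⥤ AddCommGrpCat.{v}} (m : preadditiveYoneda.obj X ⟶ E) [Mono m]
    (hQ : IsEff C (cokernel m))
    -- representables are projective only relative to additive functors, and `E` need not be one
    (hlift : ∀ {X₀ : C} (p : preadditiveYoneda.obj X₀ ⟶ cokernel m),
      ∃ e, e ≫ cokernel.π m = p) :
    ∃ r, m ≫ r = 𝟙 _ := by
  obtain ⟨X₁, X₀, f, hf, p, w, ⟨hp⟩⟩ := hQ
  obtain ⟨e, he⟩ := hlift p
  obtain ⟨v, hv⟩ := exists_map_comp_eq_of_comp_cokernel_π_eq_zero hewc m f e (by rw [he, w])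
  obtain ⟨s, hs⟩ := CokernelCofork.IsColimit.desc' hp (e - preadditiveYoneda.map v ≫ m)
    (by rw [Preadditive.comp_sub, hv, Functor.map_comp_assoc, sub_self])
  have : Epi p := epi_of_isColimit_cofork hp
  have hsπ : s ≫ cokernel.π m = 𝟙 _ := by
    change p ≫ s = _ at hs
    rw [← cancel_epi p, reassoc_of% hs, Preadditive.sub_comp, Category.assoc, cokernel.condition,
      comp_zero, sub_zero, he]
    exact (Category.comp_id p).symm
  exact ⟨_, (ShortComplex.Splitting.ofExactOfSection _
    (ShortComplex.cokernelSequence_exact m) s hsπ ‹_›).f_r⟩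

lemma exists_comp_eq_of_mono_of_isEff_cokernel (hewc : EpiIsWeakCokernel (C := C)) {X : C}
    {I F : Cᵒᵖ ⥤ AddCommGrpCat.{v}} [F.Additive] (i : I ⟶ F) [Mono i]
    (hQ : IsEff C (cokernel i)) (β : I ⟶ preadditiveYoneda.obj X) :
    ∃ ψ : F ⟶ preadditiveYoneda.obj X, i ≫ ψ = β := by
  have sq := IsPushout.of_hasPushout i β
  have := isIso_cokernel_map_of_isPushout sq
  let c := asIso (cokernel.map _ _ _ _ sq.w)
  have hlift {X₀ : C} (p : preadditiveYoneda.obj X₀ ⟶ cokernel (pushout.inr i β)) :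
      ∃ e, e ≫ cokernel.π (pushout.inr i β) = p := by
    obtain ⟨e, he⟩ := preadditiveYoneda_obj_exists_lift_of_epi (cokernel.π i) (p ≫ c.inv)
    have hc : cokernel.π i ≫ c.hom = pushout.inl i β ≫ cokernel.π _ := cokernel.π_desc _ _ _
    exact ⟨e ≫ pushout.inl i β, by rw [Category.assoc, ← hc, reassoc_of% he, c.inv_hom_id,
      Category.comp_id]⟩
  obtain ⟨r, hr⟩ := exists_retraction_of_isEff_cokernel hewc _ (hQ.of_iso c) hlift
  exact ⟨pushout.inl i β ≫ r, by rw [pushout.condition_assoc, hr, Category.comp_id]⟩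

end

theorem hom_bijective_of_ker_coker_eff_general
    (hewc : EpiIsWeakCokernel (C := C))
    (F₀ F₁ : Cᵒᵖ ⥤ AddCommGrpCat.{v}) (h₁ : IsFP C F₁)
    (φ : F₀ ⟶ F₁) (hker : IsEff C (kernel φ)) (hcoker : IsEff C (cokernel φ)) (X : C) :
    Function.Bijective (fun ψ : F₁ ⟶ preadditiveYoneda.obj X => φ ≫ ψ) := by
  have : F₁.Additive := h₁.additive
  refine ⟨fun ψ ψ' h => ?_, fun α => ?_⟩
  · have hφ : φ ≫ (ψ - ψ') = 0 := by rw [Preadditive.comp_sub, sub_eq_zero]; exact h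
    rw [← sub_eq_zero, ← cokernel.π_desc φ _ hφ, hcoker.hom_eq_zero (cokernel.desc φ _ hφ),
      comp_zero]
  · let β := cokernel.desc (kernel.ι φ) α (hker.hom_eq_zero _)
    have hQ : IsEff C (cokernel (Abelian.factorThruCoimage φ)) :=
      hcoker.of_iso (cokernelIsoOfEq (Abelian.coimage.fac φ).symm ≪≫ cokernelEpiComp _ _)
    obtain ⟨ψ, hψ⟩ := exists_comp_eq_of_mono_of_isEff_cokernel hewc _ hQ β
    refine ⟨ψ, ?_⟩
    change φ ≫ ψ = α
    rw [← Abelian.coimage.fac φ, Category.assoc, hψ]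
    exact cokernel.π_desc _ _ _

/-- If `φ : F₀ ⟶ F₁` has effaceable kernel and cokernel, then precomposition with `φ`
is an isomorphism `Hom(F₁, X(-,X)) ≅ Hom(F₀, X(-,X))` for all `X`. -/
theorem hom_bijective_of_ker_coker_eff
    (hwk : _root_.HasWeakKernels (C := C)) (hewc : EpiIsWeakCokernel (C := C))
    (F₀ F₁ : Cᵒᵖ ⥤ AddCommGrpCat.{v}) (h₀ : IsFP C F₀) (h₁ : IsFP C F₁)
    (φ : F₀ ⟶ F₁) (hker : IsEff C (kernel φ)) (hcoker : IsEff C (cokernel φ)) (X : C) :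
    Function.Bijective (fun ψ : F₁ ⟶ preadditiveYoneda.obj X => φ ≫ ψ) :=
  hom_bijective_of_ker_coker_eff_general hewc F₀ F₁ h₁ φ hker hcoker X
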